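/- arXiv:2309.14606 — 4 statements merged into one kernel-verified Lean document; each statement's English description precedes it below -/
import Mathlib

section
/- Dinkelbach sufficiency: Let D be a nonempty feasible set, let N, E : D → ℝ with E(x) > 0 for all x ∈ D, let x* ∈ D and ρ ∈ ℝ. If N(x) − ρ·E(x) ≤ 0 for all x ∈ D and N(x*) − ρ·E(x*) = 0, then ρ = N(x*)/E(x*) and x* maximizes the ratio: N(x)/E(x) ≤ N(x*)/E(x*) for all x ∈ D. -/
theorem eq_div_of_sub_mul_eq_zero {K : Type*} [Field K] {a b ρ : K} (hb : b ≠ 0)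
    (h : a - ρ * b = 0) : ρ = a / b :=
  (eq_div_iff hb).2 (sub_eq_zero.1 h).symm

theorem div_le_of_sub_mul_nonpos {K : Type*} [Field K] [LinearOrder K] [IsStrictOrderedRing K]
    {a b ρ : K} (hb : 0 < b) (h : a - ρ * b ≤ 0) : a / b ≤ ρ :=
  (div_le_iff₀ hb).2 (sub_nonpos.1 h)

theorem dinkelbach_sufficiency_general {D : Type*}
    (N E : D → ℝ) (hE : ∀ x, 0 < E x) (xstar : D) (ρ : ℝ)
    (hle : ∀ x, N x - ρ * E x ≤ 0)
    (heq : N xstar - ρ * E xstar = 0) :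
    ρ = N xstar / E xstar ∧ ∀ x, N x / E x ≤ N xstar / E xstar := by
  have hρ : ρ = N xstar / E xstar := eq_div_of_sub_mul_eq_zero (hE xstar).ne' heq
  exact ⟨hρ, fun x => hρ ▸ div_le_of_sub_mul_nonpos (hE x) (hle x)⟩

/-- Dinkelbach sufficiency: if the linearized objective `x ↦ N x - ρ * E x`
is nonpositive on a nonempty feasible set `D` (with `E > 0`) and vanishes at
`x*`, then `ρ = N x* / E x*` and `x*` maximizes the ratio `N/E` over `D`. -/
theorem dinkelbach_sufficiency {D : Type*} [Nonempty D]
    (N E : D → ℝ) (hE : ∀ x, 0 < E x) (xstar : D) (ρ : ℝ)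
    (hle : ∀ x, N x - ρ * E x ≤ 0)
    (heq : N xstar - ρ * E xstar = 0) :
    ρ = N xstar / E xstar ∧ ∀ x, N x / E x ≤ N xstar / E xstar :=
  dinkelbach_sufficiency_general N E hE xstar ρ hle heq
end

section
/- Per-user finite-blocklength rate surrogate (Lemma 1, single time slot): Fix K ≥ 1, an index k ∈ {1,…,K}, a noise power s > 0, a constant β ≥ 0, and c = log₂ e = 1/ln 2. For a ∈ ℂᴷ define b(a) = Σ_{i=1}^{K}|a_i|² + s, I(a) = Σ_{i≠k}|a_i|² + s = b(a) − |a_k|², Γ(a) = |a_k|²/I(a), Δ(a) = c²(1 − 1/(1+Γ(a))²), and R(a) = log₂(1+Γ(a)) − β·√(Δ(a)). Let a⁰ ∈ ℂᴷ be a reference point with a⁰_k ≠ 0, and set Ξ₀ = I(a⁰)/b(a⁰), L(a) = (2/b(a⁰))·(Σ_{i≠k} Re(conj(a⁰_i)·a_i) + s) − (I(a⁰)/b(a⁰)²)·b(a), and define the surrogate R̃(a) = log₂(1+Γ(a⁰)) + c·[ 2·Re(conj(a⁰_k)·(a_k − a⁰_k))/I(a⁰) − (|a⁰_k|²/(b(a⁰)·I(a⁰)))·(b(a)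 − b(a⁰)) ] − β·√(Δ(a⁰)) − β·c²·Ξ₀·(Ξ₀ − L(a))/√(Δ(a⁰)). Then R(a) ≥ R̃(a) for every a ∈ ℂᴷ. -/
/-!
Write ξ(a) = I(a)/b(a) = 1/(1 + Γ(a)), so that R = log₂(b/I) − β c √(1 − ξ²).
The logarithmic part is bounded below by `log t ≥ 1 − 1/t` at t = (b/I)/(b₀/I₀): after
Re(conj a⁰_k · a_k) ≤ |a⁰_k| |a_k| the remainder is the square (|a_k| b₀ − |a⁰_k| b)² / (b b₀ I₀).
For the dispersion, √(1 − ξ²) is concave and lies below its tangent at Ξ₀, which is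
nonincreasing in ξ because Ξ₀ ≥ 0; so it suffices that L(a) ≤ ξ(a). This follows from the
Cauchy–Schwarz bound Σ_{i≠k} Re(conj a⁰_i · a_i) + s ≤ √(I₀ I) and the tangent bound
x²/b ≥ 2 x₀ x / b₀ − x₀² b / b₀² of the quadratic-over-linear function, at x = √I.
-/

open Real ComplexConjugate

lemma log_one_add_sq_div_ge_tangent (z z₀ : ℂ) {I I₀ : ℝ} (hI : 0 < I) (hI₀ : 0 < I₀) :
    log (1 + ‖z₀‖ ^ 2 / I₀) + (2 * (conj z₀ * (z - z₀)).re / I₀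
      - ‖z₀‖ ^ 2 / ((I₀ + ‖z₀‖ ^ 2) * I₀) * (I + ‖z‖ ^ 2 - (I₀ + ‖z₀‖ ^ 2)))
      ≤ log (1 + ‖z‖ ^ 2 / I) := by
  set p := ‖z₀‖
  set q := ‖z‖
  have hre : (conj z₀ * (z - z₀)).re ≤ p * q - p ^ 2 := by
    have h := Complex.re_le_norm (conj z₀ * z)
    rw [norm_mul, Complex.norm_conj] at h
    rw [mul_sub, Complex.sub_re, Complex.conj_mul']
    norm_cast
    linarith
  have hy : 0 < 1 + q ^ 2 / I := by positivity
  have hy₀ : 0 < 1 + p ^ 2 / I₀ := by positivity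
  have hlog := one_sub_inv_le_log_of_pos (div_pos hy hy₀)
  rw [log_div hy.ne' hy₀.ne', inv_div] at hlog
  have hsq : 2 * (p * q - p ^ 2) / I₀ - p ^ 2 / ((I₀ + p ^ 2) * I₀) * (I + q ^ 2 - (I₀ + p ^ 2))
      = 1 - (1 + p ^ 2 / I₀) / (1 + q ^ 2 / I)
        - (q * (I₀ + p ^ 2) - p * (I + q ^ 2)) ^ 2 / ((I + q ^ 2) * (I₀ + p ^ 2) * I₀) := by
    field_simp
    ring
  have hnn : 0 ≤ (q * (I₀ + p ^ 2) - p * (I + q ^ 2)) ^ 2 / ((I + q ^ 2) * (I₀ + p ^ 2) * I₀) := by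
    positivity
  have : 2 * (conj z₀ * (z - z₀)).re / I₀ ≤ 2 * (p * q - p ^ 2) / I₀ := by gcongr
  linarith

lemma sqrt_one_sub_sq_le_tangent {ξ ξ₀ : ℝ} (hξ : |ξ| ≤ 1) (hξ₀ : |ξ₀| < 1) :
    √(1 - ξ ^ 2) ≤ √(1 - ξ₀ ^ 2) + ξ₀ * (ξ₀ - ξ) / √(1 - ξ₀ ^ 2) := by
  have h₀ : 0 < 1 - ξ₀ ^ 2 := sub_pos.mpr ((sq_lt_one_iff_abs_lt_one ξ₀).mpr hξ₀)
  have hpos : 0 < √(1 - ξ₀ ^ 2) := sqrt_pos.mpr h₀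
  have hprod : 0 ≤ 1 - ξ₀ * ξ := by
    have : |ξ₀ * ξ| ≤ 1 := by rw [abs_mul]; exact mul_le_one₀ hξ₀.le (abs_nonneg ξ) hξ
    linarith [le_abs_self (ξ₀ * ξ)]
  rw [← sub_nonneg]
  -- `(1 - ξ²)(1 - ξ₀²) = (1 - ξ₀ ξ)² - (ξ - ξ₀)²`
  have key : √(1 - ξ ^ 2) * √(1 - ξ₀ ^ 2) ≤ 1 - ξ₀ * ξ := by
    rw [← sqrt_mul' _ h₀.le]
    refine sqrt_le_iff.mpr ⟨hprod, ?_⟩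
    nlinarith [sq_nonneg (ξ - ξ₀)]
  have : √(1 - ξ₀ ^ 2) + ξ₀ * (ξ₀ - ξ) / √(1 - ξ₀ ^ 2) - √(1 - ξ ^ 2)
      = (1 - ξ₀ * ξ - √(1 - ξ ^ 2) * √(1 - ξ₀ ^ 2)) / √(1 - ξ₀ ^ 2) := by
    field_simp
    rw [sq_sqrt h₀.le]
    ring
  rw [this]
  exact div_nonneg (by linarith) hpos.le

lemma sqrt_mul_sqrt_add_le_sqrt_add_mul_sqrt_add {P Q s : ℝ} (hP : 0 ≤ P) (hQ : 0 ≤ Q)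
    (hs : 0 ≤ s) :
    √P * √Q + s ≤ √(P + s) * √(Q + s) := by
  rw [← sqrt_mul (by linarith : 0 ≤ P + s)]
  apply le_sqrt_of_sq_le
  nlinarith [mul_nonneg hs (sq_nonneg (√P - √Q)), sq_sqrt hP, sq_sqrt hQ]

lemma sum_re_conj_mul_add_le_sqrt_mul_sqrt {ι : Type*} (t : Finset ι) (w z : ι → ℂ) {s : ℝ}
    (hs : 0 ≤ s) :
    (∑ i ∈ t, (conj (w i) * z i).re) + s
      ≤ √((∑ i ∈ t, ‖w i‖ ^ 2) + s) * √((∑ i ∈ t, ‖z i‖ ^ 2) + s) := by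
  have hre : ∑ i ∈ t, (conj (w i) * z i).re ≤ ∑ i ∈ t, ‖w i‖ * ‖z i‖ :=
    Finset.sum_le_sum fun i _ ↦ by
      simpa only [norm_mul, Complex.norm_conj] using Complex.re_le_norm (conj (w i) * z i)
  have hCS := sum_mul_le_sqrt_mul_sqrt t (fun i ↦ ‖w i‖) (fun i ↦ ‖z i‖)
  have hshift := sqrt_mul_sqrt_add_le_sqrt_add_mul_sqrt_add
    (Finset.sum_nonneg (s := t) fun i _ ↦ sq_nonneg ‖w i‖)
    (Finset.sum_nonneg (s := t) fun i _ ↦ sq_nonneg ‖z i‖) hs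
  linarith

lemma two_div_mul_sub_div_sq_mul_le_div {T I I₀ b b₀ : ℝ} (hI : 0 ≤ I) (hI₀ : 0 ≤ I₀)
    (hb : 0 < b) (hb₀ : 0 < b₀) (hT : T ≤ √I₀ * √I) :
    2 / b₀ * T - I₀ / b₀ ^ 2 * b ≤ I / b := by
  rw [← sq_sqrt hI, ← sq_sqrt hI₀, ← sub_nonneg]
  have hsq : √I ^ 2 / b - (2 / b₀ * (√I₀ * √I) - √I₀ ^ 2 / b₀ ^ 2 * b)
      = (√I * b₀ - √I₀ * b) ^ 2 / (b * b₀ ^ 2) := by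
    field_simp
    ring
  have : 2 / b₀ * T ≤ 2 / b₀ * (√I₀ * √I) := by gcongr
  linarith [div_nonneg (sq_nonneg (√I * b₀ - √I₀ * b)) (by positivity : 0 ≤ b * b₀ ^ 2)]

theorem rate_surrogate_lower_bound_general
    (K : ℕ) (k : Fin K) (s β c : ℝ)
    (hs : 0 < s) (hβ : 0 ≤ β) (hc : c = Real.logb 2 (Real.exp 1))
    (b I Γ Δ R : (Fin K → ℂ) → ℝ)
    (hI : ∀ a, I a = (∑ i ∈ Finset.univ.erase k, ‖a i‖ ^ 2) + s)
    (hI' : ∀ a, I a = b a - ‖a k‖ ^ 2)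
    (hΓ : ∀ a, Γ a = ‖a k‖ ^ 2 / I a)
    (hΔ : ∀ a, Δ a = c ^ 2 * (1 - 1 / (1 + Γ a) ^ 2))
    (hR : ∀ a, R a = Real.logb 2 (1 + Γ a) - β * Real.sqrt (Δ a))
    (a₀ : Fin K → ℂ) (ha₀ : a₀ k ≠ 0)
    (Ξ₀ : ℝ) (hΞ₀ : Ξ₀ = I a₀ / b a₀)
    (L Rt : (Fin K → ℂ) → ℝ)
    (hL : ∀ a, L a = (2 / b a₀)
          * ((∑ i ∈ Finset.univ.erase k, ((starRingEnd ℂ) (a₀ i) * a i).re) + s)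
        - (I a₀ / (b a₀) ^ 2) * b a)
    (hRt : ∀ a, Rt a = Real.logb 2 (1 + Γ a₀)
        + c * (2 * ((starRingEnd ℂ) (a₀ k) * (a k - a₀ k)).re / I a₀
            - (‖a₀ k‖ ^ 2 / (b a₀ * I a₀)) * (b a - b a₀))
        - β * Real.sqrt (Δ a₀)
        - β * c ^ 2 * Ξ₀ * (Ξ₀ - L a) / Real.sqrt (Δ a₀)) :
    ∀ a : Fin K → ℂ, Rt a ≤ R a := by
  intro a
  have hc' : c = 1 / log 2 := by rw [hc, logb, log_exp]
  have hc₀ : 0 < c := by rw [hc']; exact one_div_pos.mpr (log_pos one_lt_two)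
  have hIpos (x : Fin K → ℂ) : 0 < I x :=
    hI x ▸ add_pos_of_nonneg_of_pos (Finset.sum_nonneg fun i _ ↦ sq_nonneg ‖x i‖) hs
  have hbI (x : Fin K → ℂ) : b x = I x + ‖x k‖ ^ 2 := by linarith [hI' x]
  have hbpos (x : Fin K → ℂ) : 0 < b x := by
    rw [hbI]; exact add_pos_of_pos_of_nonneg (hIpos x) (sq_nonneg _)
  have hsqrtΔ (x : Fin K → ℂ) : √(Δ x) = c * √(1 - (I x / b x) ^ 2) := by
    have : 1 / (1 + Γ x) = I x / b x := by
      rw [hΓ, hbI]; field_simp [(hIpos x).ne']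
    rw [hΔ, ← one_div_pow, this, sqrt_mul (sq_nonneg c), sqrt_sq hc₀.le]
  have hlog : logb 2 (1 + Γ a₀) + c * (2 * (conj (a₀ k) * (a k - a₀ k)).re / I a₀
      - ‖a₀ k‖ ^ 2 / (b a₀ * I a₀) * (b a - b a₀)) ≤ logb 2 (1 + Γ a) := by
    have := log_one_add_sq_div_ge_tangent (a k) (a₀ k) (hIpos a) (hIpos a₀)
    rw [← hbI, ← hbI, ← hΓ, ← hΓ] at this
    rw [logb, logb, hc', one_div_mul_eq_div, ← add_div]
    gcongr
  have hLξ : L a ≤ I a / b a := by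
    rw [hL]
    refine two_div_mul_sub_div_sq_mul_le_div (hIpos a).le (hIpos a₀).le (hbpos a) (hbpos a₀) ?_
    simpa only [← hI] using sum_re_conj_mul_add_le_sqrt_mul_sqrt (Finset.univ.erase k) a₀ a hs.le
  have hΞ₀pos : 0 < Ξ₀ := hΞ₀ ▸ div_pos (hIpos a₀) (hbpos a₀)
  have hΞ₀lt : Ξ₀ < 1 := by
    rw [hΞ₀, div_lt_one (hbpos a₀), hbI]
    exact lt_add_of_pos_right _ (pow_pos (norm_pos_iff.mpr ha₀) 2)
  have hξ : |I a / b a| ≤ 1 := by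
    rw [abs_of_pos (div_pos (hIpos a) (hbpos a)), div_le_one (hbpos a), hbI]
    nlinarith [sq_nonneg ‖a k‖]
  have hsqrt : √(1 - (I a / b a) ^ 2) ≤ √(1 - Ξ₀ ^ 2) + Ξ₀ * (Ξ₀ - L a) / √(1 - Ξ₀ ^ 2) := by
    refine (sqrt_one_sub_sq_le_tangent hξ (abs_lt.mpr ⟨by linarith, hΞ₀lt⟩)).trans ?_
    gcongr
  rw [hR, hRt, hsqrtΔ a, hsqrtΔ a₀, ← hΞ₀]
  have : β * c ^ 2 * Ξ₀ * (Ξ₀ - L a) / (c * √(1 - Ξ₀ ^ 2))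
      = β * c * (Ξ₀ * (Ξ₀ - L a) / √(1 - Ξ₀ ^ 2)) := by
    field_simp
  linarith [mul_le_mul_of_nonneg_left hsqrt (mul_nonneg hβ hc₀.le)]

/-- Per-user finite-blocklength rate surrogate (Lemma 1, single time slot):
with `b(a) = Σᵢ|aᵢ|² + s`, `I(a) = Σ_{i≠k}|aᵢ|² + s`, `Γ(a) = |a_k|²/I(a)`,
`Δ(a) = c²(1 − 1/(1+Γ(a))²)`, `R(a) = log₂(1+Γ(a)) − β√(Δ(a))`,
`Ξ₀ = I(a⁰)/b(a⁰)`,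
`L(a) = (2/b(a⁰))(Σ_{i≠k} Re(conj(a⁰ᵢ)aᵢ) + s) − (I(a⁰)/b(a⁰)²)·b(a)`, and
`R̃(a) = log₂(1+Γ(a⁰)) + c[2Re(conj(a⁰_k)(a_k−a⁰_k))/I(a⁰)
  − (|a⁰_k|²/(b(a⁰)I(a⁰)))(b(a)−b(a⁰))] − β√(Δ(a⁰))
  − βc²Ξ₀(Ξ₀−L(a))/√(Δ(a⁰))`,
the surrogate lower-bounds the rate: `R(a) ≥ R̃(a)` for every `a ∈ ℂᴷ`. -/
theorem rate_surrogate_lower_bound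
    (K : ℕ) (hK : 1 ≤ K) (k : Fin K) (s β c : ℝ)
    (hs : 0 < s) (hβ : 0 ≤ β) (hc : c = Real.logb 2 (Real.exp 1))
    (b I Γ Δ R : (Fin K → ℂ) → ℝ)
    (hb : ∀ a, b a = (∑ i, ‖a i‖ ^ 2) + s)
    (hI : ∀ a, I a = (∑ i ∈ Finset.univ.erase k, ‖a i‖ ^ 2) + s)
    (hI' : ∀ a, I a = b a - ‖a k‖ ^ 2)
    (hΓ : ∀ a, Γ a = ‖a k‖ ^ 2 / I a)
    (hΔ : ∀ a, Δ a = c ^ 2 * (1 - 1 / (1 + Γ a) ^ 2))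
    (hR : ∀ a, R a = Real.logb 2 (1 + Γ a) - β * Real.sqrt (Δ a))
    (a₀ : Fin K → ℂ) (ha₀ : a₀ k ≠ 0)
    (Ξ₀ : ℝ) (hΞ₀ : Ξ₀ = I a₀ / b a₀)
    (L Rt : (Fin K → ℂ) → ℝ)
    (hL : ∀ a, L a = (2 / b a₀)
          * ((∑ i ∈ Finset.univ.erase k, ((starRingEnd ℂ) (a₀ i) * a i).re) + s)
        - (I a₀ / (b a₀) ^ 2) * b a)
    (hRt : ∀ a, Rt a = Real.logb 2 (1 + Γ a₀)
        + c * (2 * ((starRingEnd ℂ) (a₀ k) * (a k - a₀ k)).re / I a₀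
            - (‖a₀ k‖ ^ 2 / (b a₀ * I a₀)) * (b a - b a₀))
        - β * Real.sqrt (Δ a₀)
        - β * c ^ 2 * Ξ₀ * (Ξ₀ - L a) / Real.sqrt (Δ a₀)) :
    ∀ a : Fin K → ℂ, Rt a ≤ R a :=
  rate_surrogate_lower_bound_general K k s β c hs hβ hc b I Γ Δ R hI hI' hΓ hΔ hR a₀ ha₀ Ξ₀ hΞ₀ L Rt
    hL hRt
end

section
/- First-order lower bound for the log-SINR term: For complex numbers a, a₀ and real numbers b, b₀ with |a|² < b and |a₀|² < b₀, it holds that ln(b/(b−|a|²)) ≥ ln(b₀/(b₀−|a₀|²)) + 2·Re(conj(a₀)·(a − a₀))/(b₀ − |a₀|²) − (|a₀|²/(b₀·(b₀ − |a₀|²)))·(b − b₀), with equality when (a, b) = (a₀, b₀). -/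
/-!
The map `(a, b) ↦ ln (b / (b - |a|²)) = -ln (1 - |a|² / b)` is convex: `|a|² / b` is the jointly
convex quadratic-over-linear function and `s ↦ -ln (1 - s)` is convex and increasing on `s < 1`.
The bound is its tangent-plane inequality at `(a₀, b₀)`, obtained by composing the tangent bounds
of the two pieces.
-/

open RealInnerProductSpace

theorem tangent_le_norm_sq_div_sub_norm_sq_div {E : Type*} [NormedAddCommGroup E]
    [InnerProductSpace ℝ E] (x x₀ : E) {b b₀ : ℝ} (hb : 0 < b) (hb₀ : 0 < b₀) :
    2 * ⟪x₀, x - x₀⟫ / b₀ - ‖x₀‖ ^ 2 / b₀ ^ 2 * (b - b₀) ≤ ‖x‖ ^ 2 / b - ‖x₀‖ ^ 2 / b₀ := by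
  have hgap : ‖x‖ ^ 2 / b - ‖x₀‖ ^ 2 / b₀ - (2 * ⟪x₀, x - x₀⟫ / b₀ - ‖x₀‖ ^ 2 / b₀ ^ 2 * (b - b₀))
      = ‖b₀ • x - b • x₀‖ ^ 2 / (b * b₀ ^ 2) := by
    rw [norm_sub_sq_real, norm_smul, norm_smul, real_inner_smul_left, real_inner_smul_right,
      inner_sub_right, real_inner_self_eq_norm_sq, real_inner_comm, Real.norm_of_nonneg hb.le,
      Real.norm_of_nonneg hb₀.le]
    field_simp
    ring
  rw [← sub_nonneg, hgap]
  positivity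

theorem sub_div_le_log_sub_log {x y : ℝ} (hx : 0 < x) (hy : 0 < y) :
    (x - y) / x ≤ Real.log x - Real.log y := by
  have h := Real.one_sub_inv_le_log_of_pos (div_pos hx hy)
  rwa [Real.log_div hx.ne' hy.ne', inv_div, one_sub_div hx.ne'] at h

theorem log_div_sub_eq_neg_log {b u : ℝ} : Real.log (b / (b - u)) = -Real.log ((b - u) / b) := by
  rw [← Real.log_inv, inv_div]

/-- First-order lower bound for the log-SINR term: for complex `a, a₀` and
real `b, b₀` with `|a|² < b` and `|a₀|² < b₀`,
`ln(b/(b−|a|²)) ≥ ln(b₀/(b₀−|a₀|²)) + 2·Re(conj(a₀)(a−a₀))/(b₀−|a₀|²)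
  − (|a₀|²/(b₀(b₀−|a₀|²)))·(b−b₀)`, with equality when `(a,b) = (a₀,b₀)`. -/
theorem log_sinr_first_order_lower_bound
    (a a₀ : ℂ) (b b₀ : ℝ)
    (ha : ‖a‖ ^ 2 < b) (ha₀ : ‖a₀‖ ^ 2 < b₀) :
    Real.log (b₀ / (b₀ - ‖a₀‖ ^ 2))
        + 2 * ((starRingEnd ℂ) a₀ * (a - a₀)).re / (b₀ - ‖a₀‖ ^ 2)
        - (‖a₀‖ ^ 2 / (b₀ * (b₀ - ‖a₀‖ ^ 2))) * (b - b₀)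
      ≤ Real.log (b / (b - ‖a‖ ^ 2)) ∧
    (a = a₀ → b = b₀ →
      Real.log (b / (b - ‖a‖ ^ 2))
        = Real.log (b₀ / (b₀ - ‖a₀‖ ^ 2))
          + 2 * ((starRingEnd ℂ) a₀ * (a - a₀)).re / (b₀ - ‖a₀‖ ^ 2)
          - (‖a₀‖ ^ 2 / (b₀ * (b₀ - ‖a₀‖ ^ 2))) * (b - b₀)) := by
  refine ⟨?_, by rintro rfl rfl; simp⟩
  have hb : 0 < b := (sq_nonneg ‖a‖).trans_lt ha
  have hb₀ : 0 < b₀ := (sq_nonneg ‖a₀‖).trans_lt ha₀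
  have hd₀ : 0 < b₀ - ‖a₀‖ ^ 2 := sub_pos.2 ha₀
  have htangent := tangent_le_norm_sq_div_sub_norm_sq_div a a₀ hb hb₀
  rw [Complex.inner, mul_comm (a - a₀)] at htangent
  have hlog := sub_div_le_log_sub_log (div_pos hd₀ hb₀) (div_pos (sub_pos.2 ha) hb)
  rw [show (b₀ - ‖a₀‖ ^ 2) / b₀ - (b - ‖a‖ ^ 2) / b = ‖a‖ ^ 2 / b - ‖a₀‖ ^ 2 / b₀ by
    field_simp; ring] at hlog
  rw [log_div_sub_eq_neg_log, log_div_sub_eq_neg_log]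
  calc _ = -Real.log ((b₀ - ‖a₀‖ ^ 2) / b₀)
        + (2 * ((starRingEnd ℂ) a₀ * (a - a₀)).re / b₀
          - ‖a₀‖ ^ 2 / b₀ ^ 2 * (b - b₀)) / ((b₀ - ‖a₀‖ ^ 2) / b₀) := by
        field_simp
        ring
    _ ≤ -Real.log ((b₀ - ‖a₀‖ ^ 2) / b₀)
        + (‖a‖ ^ 2 / b - ‖a₀‖ ^ 2 / b₀) / ((b₀ - ‖a₀‖ ^ 2) / b₀) := by gcongr
    _ ≤ _ := by linarith
end

section
/- Joint convexity of the log-SINR term: The function f(a, b) = ln(b) − ln(b − |a|²), defined on the set S = {(a, b) ∈ ℂ × ℝ : |a|² < b}, is convex on S (where ℂ × ℝ is regarded as a real vector space and S is a convex set). -/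
lemma log_sinr_aux1 (n np nq p2 q2 t : ℝ) (ht : 0 ≤ t) (ht1 : t ≤ 1) (h0 : 0 ≤ n)
    (h1 : n ≤ t * np + (1 - t) * nq) (hp : np ^ 2 < p2) (hq : nq ^ 2 < q2) :
    n ^ 2 < t * p2 + (1 - t) * q2 := by
  nlinarith [mul_self_le_mul_self h0 h1,
    mul_nonneg (mul_nonneg ht (by linarith : (0:ℝ) ≤ 1 - t)) (sq_nonneg (np - nq)),
    mul_le_mul_of_nonneg_left hp.le ht,
    mul_le_mul_of_nonneg_left hq.le (by linarith : (0:ℝ) ≤ 1 - t)]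

lemma log_sinr_aux2 (x y b₁ b₂ t : ℝ) (ht : 0 ≤ t) (ht1 : t ≤ 1) :
    (t * x + (1 - t) * y) ^ 2 * (b₁ * b₂)
      ≤ (t * b₁ + (1 - t) * b₂) * (t * x ^ 2 * b₂ + (1 - t) * y ^ 2 * b₁) := by
  nlinarith [mul_nonneg (mul_nonneg ht (by linarith : (0:ℝ) ≤ 1 - t))
    (sq_nonneg (x * b₂ - y * b₁))]

/-- Joint convexity of the log-SINR term: the function
`f(a, b) = ln b − ln(b − |a|²)` is convex on `S = {(a, b) ∈ ℂ × ℝ : |a|² < b}`,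
where `ℂ × ℝ` is regarded as a real vector space. -/
theorem log_sinr_convexOn :
    ConvexOn ℝ {p : ℂ × ℝ | ‖p.1‖ ^ 2 < p.2}
      (fun p : ℂ × ℝ => Real.log p.2 - Real.log (p.2 - ‖p.1‖ ^ 2)) := by
  constructor
  · -- convexity of the set
    rintro ⟨a₁, b₁⟩ hp ⟨a₂, b₂⟩ hq t s ht hs hts
    have hs' : s = 1 - t := by linarith
    subst hs'
    have ht1 : t ≤ 1 := by linarith
    simp only [Set.mem_setOf_eq, Prod.fst_add, Prod.snd_add, Prod.smul_fst, Prod.smul_snd,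
      smul_eq_mul] at *
    have h1 : ‖t • a₁ + (1 - t) • a₂‖ ≤ t * ‖a₁‖ + (1 - t) * ‖a₂‖ := by
      calc ‖t • a₁ + (1 - t) • a₂‖ ≤ ‖t • a₁‖ + ‖(1 - t) • a₂‖ := norm_add_le _ _
        _ = t * ‖a₁‖ + (1 - t) * ‖a₂‖ := by
            rw [norm_smul, norm_smul, Real.norm_eq_abs, Real.norm_eq_abs,
              abs_of_nonneg ht, abs_of_nonneg hs]
    exact log_sinr_aux1 _ _ _ _ _ _ ht ht1 (norm_nonneg _) h1 hp hq
  · rintro ⟨a₁, b₁⟩ hx ⟨a₂, b₂⟩ hy t s ht hs hts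
    have hs' : s = 1 - t := by linarith
    subst hs'
    have ht1 : t ≤ 1 := by linarith
    simp only [Set.mem_setOf_eq] at hx hy
    simp only [Prod.fst_add, Prod.snd_add, Prod.smul_fst, Prod.smul_snd, smul_eq_mul]
    have hb₁ : 0 < b₁ := lt_of_le_of_lt (sq_nonneg _) hx
    have hb₂ : 0 < b₂ := lt_of_le_of_lt (sq_nonneg _) hy
    set B : ℝ := t * b₁ + (1 - t) * b₂ with hB
    set A : ℝ := ‖t • a₁ + (1 - t) • a₂‖ ^ 2 with hA
    have hBpos : 0 < B := by rw [hB]; nlinarith [mul_nonneg ht hb₁.le, mul_nonneg hs hb₂.le]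
    have hAnn : 0 ≤ A := sq_nonneg _
    have hnorm : ‖t • a₁ + (1 - t) • a₂‖ ≤ t * ‖a₁‖ + (1 - t) * ‖a₂‖ := by
      calc ‖t • a₁ + (1 - t) • a₂‖ ≤ ‖t • a₁‖ + ‖(1 - t) • a₂‖ := norm_add_le _ _
        _ = t * ‖a₁‖ + (1 - t) * ‖a₂‖ := by
            rw [norm_smul, norm_smul, Real.norm_eq_abs, Real.norm_eq_abs,
              abs_of_nonneg ht, abs_of_nonneg hs]
    have hA2 : A ≤ (t * ‖a₁‖ + (1 - t) * ‖a₂‖) ^ 2 := by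
      rw [hA]
      exact pow_le_pow_left₀ (norm_nonneg _) hnorm 2
    clear_value A B
    -- key inequality: A ≤ B * (t * g₁ + (1-t) * g₂)
    have hkey' : A * (b₁ * b₂) ≤ B * (t * ‖a₁‖ ^ 2 * b₂ + (1 - t) * ‖a₂‖ ^ 2 * b₁) := by
      calc A * (b₁ * b₂) ≤ (t * ‖a₁‖ + (1 - t) * ‖a₂‖) ^ 2 * (b₁ * b₂) :=
            mul_le_mul_of_nonneg_right hA2 (mul_pos hb₁ hb₂).le
        _ ≤ B * (t * ‖a₁‖ ^ 2 * b₂ + (1 - t) * ‖a₂‖ ^ 2 * b₁) := by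
            rw [hB]; exact log_sinr_aux2 _ _ _ _ _ ht ht1
    have hdivsum : t * (‖a₁‖ ^ 2 / b₁) + (1 - t) * (‖a₂‖ ^ 2 / b₂)
        = (t * ‖a₁‖ ^ 2 * b₂ + (1 - t) * ‖a₂‖ ^ 2 * b₁) / (b₁ * b₂) := by
      field_simp
    have hkey : A ≤ B * (t * (‖a₁‖ ^ 2 / b₁) + (1 - t) * (‖a₂‖ ^ 2 / b₂)) := by
      rw [hdivsum, mul_div_assoc', le_div_iff₀ (mul_pos hb₁ hb₂)]
      exact hkey'
    have hg₁ : (0:ℝ) < 1 - ‖a₁‖ ^ 2 / b₁ := by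
      rw [sub_pos, div_lt_one hb₁]; exact hx
    have hg₂ : (0:ℝ) < 1 - ‖a₂‖ ^ 2 / b₂ := by
      rw [sub_pos, div_lt_one hb₂]; exact hy
    have hsum : 0 < t * (1 - ‖a₁‖ ^ 2 / b₁) + (1 - t) * (1 - ‖a₂‖ ^ 2 / b₂) := by
      rcases eq_or_lt_of_le ht with h | h
      · rw [← h]; simpa using hg₂
      · have := mul_pos h hg₁
        have := mul_nonneg (by linarith : (0:ℝ) ≤ 1 - t) hg₂.le
        linarith
    have hexpand : t * (1 - ‖a₁‖ ^ 2 / b₁) + (1 - t) * (1 - ‖a₂‖ ^ 2 / b₂)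
        = 1 - (t * (‖a₁‖ ^ 2 / b₁) + (1 - t) * (‖a₂‖ ^ 2 / b₂)) := by ring
    have hfrac : t * (‖a₁‖ ^ 2 / b₁) + (1 - t) * (‖a₂‖ ^ 2 / b₂) < 1 := by
      rw [hexpand] at hsum; linarith
    have hBA : A < B := by nlinarith [hkey, hBpos]
    -- log concavity step
    have hconc := strictConcaveOn_log_Ioi.concaveOn.2 (Set.mem_Ioi.2 hg₁)
      (Set.mem_Ioi.2 hg₂) ht (by linarith : (0:ℝ) ≤ 1 - t) (by ring)
    simp only [smul_eq_mul] at hconc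
    -- monotone log step
    have hmono : Real.log (t * (1 - ‖a₁‖ ^ 2 / b₁) + (1 - t) * (1 - ‖a₂‖ ^ 2 / b₂)) ≤
        Real.log ((B - A) / B) := by
      apply Real.log_le_log hsum
      rw [le_div_iff₀ hBpos, hexpand]
      nlinarith [hkey]
    -- rewrite logs of quotients
    have r₁ : Real.log (1 - ‖a₁‖ ^ 2 / b₁) = Real.log (b₁ - ‖a₁‖ ^ 2) - Real.log b₁ := by
      rw [show (1 : ℝ) - ‖a₁‖ ^ 2 / b₁ = (b₁ - ‖a₁‖ ^ 2) / b₁ by field_simp,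
        Real.log_div (by linarith) hb₁.ne']
    have r₂ : Real.log (1 - ‖a₂‖ ^ 2 / b₂) = Real.log (b₂ - ‖a₂‖ ^ 2) - Real.log b₂ := by
      rw [show (1 : ℝ) - ‖a₂‖ ^ 2 / b₂ = (b₂ - ‖a₂‖ ^ 2) / b₂ by field_simp,
        Real.log_div (by linarith) hb₂.ne']
    have rB : Real.log ((B - A) / B) = Real.log (B - A) - Real.log B :=
      Real.log_div (by linarith) hBpos.ne'
    rw [r₁, r₂] at hconc
    rw [rB] at hmono
    have final := hconc.trans hmono
    show Real.log B - Real.log (B - A)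
        ≤ t * (Real.log b₁ - Real.log (b₁ - ‖a₁‖ ^ 2))
        + (1 - t) * (Real.log b₂ - Real.log (b₂ - ‖a₂‖ ^ 2))
    linarith [final]
end
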